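/- Suppose in addition that A and D are invertible in Mat_N(𝒜). Then with M := D A^{−1} D^{−1} A, the quantum moment map identity holds on the coordinate generators: R₂₁ M₁ R A₂ = A₂ R₂₁ M₁ R. (This is the matrix identity establishing that the loop moment map μ^e_v, l^i_j ↦ M^i_j, satisfies the quantum moment map condition μ(x)·y = (x₍₁₎ ▷ y)·μ(x₍₂₎) on the generators a^m_n.) -/

import Mathlib

open Matrix Kronecker

noncomputable section

/-- Coefficient matrix of the R-matrix `R[N]` on `k^N ⊗ k^N`: the entry in
row `(i,j)`, column `(s,t)` is `q^{δ_{ij}} δ_{is} δ_{jt} + (q-q⁻¹) θ(i-j) δ_{it} δ_{js}`,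
where `θ(x) = 1` if `x > 0` and `0` otherwise. -/
def Rmat (k : Type) [Field k] (q : k) (N : ℕ) :
    Matrix (Fin N × Fin N) (Fin N × Fin N) k :=
  Matrix.of fun p r =>
    (if p.1 = p.2 then q else 1) * (if p = r then 1 else 0)
      + (q - q⁻¹) * ((if p.2 < p.1 then (1 : k) else 0) *
          (if p.1 = r.2 ∧ p.2 = r.1 then 1 else 0))

/-- The explicit inverse of `R[N]`:
`(R⁻¹)^{ij}_{st} = q^{-δ_{ij}} δ_{is} δ_{jt} - (q-q⁻¹) θ(i-j) δ_{it} δ_{js}`. -/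
def RmatInv (k : Type) [Field k] (q : k) (N : ℕ) :
    Matrix (Fin N × Fin N) (Fin N × Fin N) k :=
  Matrix.of fun p r =>
    (if p.1 = p.2 then q⁻¹ else 1) * (if p = r then 1 else 0)
      - (q - q⁻¹) * ((if p.2 < p.1 then (1 : k) else 0) *
          (if p.1 = r.2 ∧ p.2 = r.1 then 1 else 0))

variable (k : Type) [Field k] (𝒜 : Type) [Ring 𝒜] [Algebra k 𝒜]

/-- `R[N]` regarded as a matrix over the `k`-algebra `𝒜`. -/
def RA (q : k) (N : ℕ) : Matrix (Fin N × Fin N) (Fin N × Fin N) 𝒜 :=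
  (Rmat k q N).map (algebraMap k 𝒜)

/-- `R[N]₂₁ := τ ∘ R[N] ∘ τ` regarded as a matrix over `𝒜`. -/
def RA21 (q : k) (N : ℕ) : Matrix (Fin N × Fin N) (Fin N × Fin N) 𝒜 :=
  Matrix.of fun p r => RA k 𝒜 q N (p.2, p.1) (r.2, r.1)

/-- `(R[N])⁻¹` regarded as a matrix over `𝒜`. -/
def RAinv (q : k) (N : ℕ) : Matrix (Fin N × Fin N) (Fin N × Fin N) 𝒜 :=
  (RmatInv k q N).map (algebraMap k 𝒜)

/-- `(R[N]₂₁)⁻¹ = (R[N]⁻¹)₂₁` regarded as a matrix over `𝒜`. -/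
def RAinv21 (q : k) (N : ℕ) : Matrix (Fin N × Fin N) (Fin N × Fin N) 𝒜 :=
  Matrix.of fun p r => RAinv k 𝒜 q N (p.2, p.1) (r.2, r.1)

/-- The flip `τ : k^m ⊗ k^n → k^n ⊗ k^m` as a matrix over `𝒜`. -/
def flipA (m n : ℕ) : Matrix (Fin n × Fin m) (Fin m × Fin n) 𝒜 :=
  Matrix.of fun p r => if p.1 = r.2 ∧ p.2 = r.1 then 1 else 0

/-- The defining relations (M1), (M2), (M3) of the quantized edge algebra `𝒟_q(e)`
of the Kronecker quiver with tail dimension `n` and head dimension `m`, for an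
`n × m` matrix `A` and an `m × n` matrix `D` over `𝒜`:
(M1) `R[n] A₂ A₁ = A₁ A₂ R[m]₂₁`, (M2) `R[m] D₂ D₁ = D₁ D₂ R[n]₂₁`,
(M3) `D₂ (R[n])⁻¹ A₁ = A₁ R[m] D₂ + τ`. -/
def EdgeRel (q : k) {n m : ℕ}
    (A : Matrix (Fin n) (Fin m) 𝒜) (D : Matrix (Fin m) (Fin n) 𝒜) : Prop :=
  RA k 𝒜 q n * ((1 : Matrix (Fin n) (Fin n) 𝒜) ⊗ₖ A) * (A ⊗ₖ (1 : Matrix (Fin m) (Fin m) 𝒜))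
      = (A ⊗ₖ (1 : Matrix (Fin n) (Fin n) 𝒜)) * ((1 : Matrix (Fin m) (Fin m) 𝒜) ⊗ₖ A)
          * RA21 k 𝒜 q m
    ∧ RA k 𝒜 q m * ((1 : Matrix (Fin m) (Fin m) 𝒜) ⊗ₖ D) * (D ⊗ₖ (1 : Matrix (Fin n) (Fin n) 𝒜))
      = (D ⊗ₖ (1 : Matrix (Fin m) (Fin m) 𝒜)) * ((1 : Matrix (Fin n) (Fin n) 𝒜) ⊗ₖ D)
          * RA21 k 𝒜 q n
    ∧ ((1 : Matrix (Fin n) (Fin n) 𝒜) ⊗ₖ D) * RAinv k 𝒜 q n * (A ⊗ₖ (1 : Matrix (Fin n) (Fin n) 𝒜))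
      = (A ⊗ₖ (1 : Matrix (Fin m) (Fin m) 𝒜)) * RA k 𝒜 q m * ((1 : Matrix (Fin m) (Fin m) 𝒜) ⊗ₖ D)
          + flipA 𝒜 m n

/-- The defining relations (L1), (L2), (L3) of the quantized loop edge algebra `𝒟_q(e)`
at a vertex of dimension `N`, with `R := R[N]`:
(L1) `R₂₁ A₁ R A₂ = A₂ R₂₁ A₁ R`, (L2) `R₂₁ D₁ R D₂ = D₂ R₂₁ D₁ R`,
(L3) `R₂₁ D₁ R A₂ = A₂ R₂₁ D₁ R₂₁⁻¹`. -/
def LoopRel (q : k) {N : ℕ} (A D : Matrix (Fin N) (Fin N) 𝒜) : Prop :=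
  RA21 k 𝒜 q N * (A ⊗ₖ (1 : Matrix (Fin N) (Fin N) 𝒜)) * RA k 𝒜 q N
        * ((1 : Matrix (Fin N) (Fin N) 𝒜) ⊗ₖ A)
      = ((1 : Matrix (Fin N) (Fin N) 𝒜) ⊗ₖ A) * RA21 k 𝒜 q N
        * (A ⊗ₖ (1 : Matrix (Fin N) (Fin N) 𝒜)) * RA k 𝒜 q N
    ∧ RA21 k 𝒜 q N * (D ⊗ₖ (1 : Matrix (Fin N) (Fin N) 𝒜)) * RA k 𝒜 q N
        * ((1 : Matrix (Fin N) (Fin N) 𝒜) ⊗ₖ D)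
      = ((1 : Matrix (Fin N) (Fin N) 𝒜) ⊗ₖ D) * RA21 k 𝒜 q N
        * (D ⊗ₖ (1 : Matrix (Fin N) (Fin N) 𝒜)) * RA k 𝒜 q N
    ∧ RA21 k 𝒜 q N * (D ⊗ₖ (1 : Matrix (Fin N) (Fin N) 𝒜)) * RA k 𝒜 q N
        * ((1 : Matrix (Fin N) (Fin N) 𝒜) ⊗ₖ A)
      = ((1 : Matrix (Fin N) (Fin N) 𝒜) ⊗ₖ A) * RA21 k 𝒜 q N
        * (D ⊗ₖ (1 : Matrix (Fin N) (Fin N) 𝒜)) * RAinv21 k 𝒜 q N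

/-! Write `U := R A₂ R⁻¹`, `U' := R₂₁⁻¹ A₂ R₂₁` and `W := R A₂ R₂₁`. Cancelling `R₂₁` on the left
and `R` (resp. `R₂₁⁻¹`) on the right turns (L1) into `A₁ U = U' A₁`, (L3) into `D₁ W = U' D₁`, and
the claim into `M₁ U = U' M₁`. The Hecke relations `R₂₁ = R⁻¹ + (q - q⁻¹) τ` and
`R = R₂₁⁻¹ + (q - q⁻¹) τ` give `W = U + (q - q⁻¹) R A₂ τ = U' + (q - q⁻¹) τ A₂ R₂₁`, and
conjugation by the flip `τ` gives `A₁ (R A₂ τ) = (τ A₂ R₂₁) A₁`, so `A₁` commutes with `W`.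
Saying that `X` carries `Y` to `Z` when `X Y = Z X`, the four factors of `M₁ = D₁ A₁⁻¹ D₁⁻¹ A₁`
carry, from right to left, `U` to `U'`, `U'` to `W`, `W` to `W` and `W` to `U'`. -/

theorem reflection_eq_iff_semiconjBy {M : Type*} [Monoid M] (r' s : Mˣ) (x r y : M) :
    ↑r' * x * r * y = y * ↑r' * x * ↑s ↔ SemiconjBy x (r * y * ↑s⁻¹) (↑r'⁻¹ * y * ↑r') := by
  conv_rhs => rw [SemiconjBy, ← Units.mul_right_inj r', ← Units.mul_left_inj s]
  simp only [mul_assoc, Units.mul_inv_cancel_left, Units.inv_mul, mul_one]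

section Kronecker

variable {α l m n : Type*}

lemma submatrix_swap_one_kronecker [MulZeroOneClass α] [DecidableEq m] (X : Matrix n n α) :
    ((1 : Matrix m m α) ⊗ₖ X).submatrix Prod.swap Prod.swap = X ⊗ₖ 1 := by
  ext ⟨i, j⟩ ⟨s, t⟩
  simp [Matrix.one_apply]

lemma submatrix_swap_kronecker_one [MulZeroOneClass α] [DecidableEq m] (X : Matrix n n α) :
    (X ⊗ₖ (1 : Matrix m m α)).submatrix Prod.swap Prod.swap = 1 ⊗ₖ X := by
  ext ⟨i, j⟩ ⟨s, t⟩
  simp [Matrix.one_apply]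

lemma submatrix_swap_mul_submatrix_swap [Fintype n] [NonUnitalNonAssocSemiring α]
    (X Y : Matrix (n × n) (n × n) α) :
    X.submatrix Prod.swap Prod.swap * Y.submatrix Prod.swap Prod.swap
      = (X * Y).submatrix Prod.swap Prod.swap :=
  submatrix_mul_equiv X Y _ (Equiv.prodComm n n) _

lemma kronecker_one_mul_kronecker_one [Semiring α] [Fintype m] [Fintype n] [DecidableEq n]
    (X : Matrix l m α) (Y : Matrix m l α) :
    (X ⊗ₖ (1 : Matrix n n α)) * (Y ⊗ₖ (1 : Matrix n n α)) = (X * Y) ⊗ₖ 1 := by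
  ext ⟨i, j⟩ ⟨s, t⟩
  simp [Matrix.mul_apply, Fintype.sum_prod_type, Matrix.one_apply]

lemma SemiconjBy.kronecker_one_inv_symm_left [Semiring α] [Fintype m] [DecidableEq m] [Fintype n]
    [DecidableEq n] {X Y : Matrix m m α} {x y : Matrix (m × n) (m × n) α}
    (hXY : X * Y = 1) (hYX : Y * X = 1) (h : SemiconjBy (X ⊗ₖ 1) x y) :
    SemiconjBy (Y ⊗ₖ 1) y x :=
  SemiconjBy.units_inv_symm_left (a := ⟨X ⊗ₖ 1, Y ⊗ₖ 1,
    by rw [kronecker_one_mul_kronecker_one, hXY, one_kronecker_one],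
    by rw [kronecker_one_mul_kronecker_one, hYX, one_kronecker_one]⟩) h

end Kronecker

variable {k 𝒜}

lemma Rmat_mul_RmatInv {q : k} (hq : q ≠ 0) (N : ℕ) : Rmat k q N * RmatInv k q N = 1 := by
  ext ⟨i, j⟩ ⟨s, t⟩
  simp only [Matrix.mul_apply, Rmat, RmatInv, of_apply, Fintype.sum_prod_type, Prod.mk.injEq,
    Matrix.one_apply, add_mul, mul_sub, Finset.sum_sub_distrib, ite_and, mul_ite, ite_mul, mul_one,
    mul_zero, one_mul, zero_mul, Finset.sum_ite_irrel, Finset.sum_ite_eq', Finset.mem_univ, if_true,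
    Finset.sum_const_zero]
  rcases lt_trichotomy i j with h | rfl | h <;> split_ifs <;> (try omega) <;> field_simp <;> ring

lemma Rmat_swap_swap_eq_RmatInv_add (q : k) (N : ℕ) (p r : Fin N × Fin N) :
    Rmat k q N p.swap r.swap = RmatInv k q N p r + if p = r.swap then q - q⁻¹ else 0 := by
  obtain ⟨i, j⟩ := p
  obtain ⟨s, t⟩ := r
  simp only [Rmat, RmatInv, of_apply, Prod.swap_prod_mk, Prod.mk.injEq]
  rcases lt_trichotomy i j with h | rfl | h <;> split_ifs <;> first | omega | ring

lemma RA_mul_RAinv {q : k} (hq : q ≠ 0) (N : ℕ) : RA k 𝒜 q N * RAinv k 𝒜 q N = 1 := by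
  simp [RA, RAinv, ← Matrix.map_mul, Rmat_mul_RmatInv hq]

lemma RAinv_mul_RA {q : k} (hq : q ≠ 0) (N : ℕ) : RAinv k 𝒜 q N * RA k 𝒜 q N = 1 := by
  simp [RA, RAinv, ← Matrix.map_mul, mul_eq_one_comm.1 (Rmat_mul_RmatInv hq N)]

lemma RA21_mul_RAinv21 {q : k} (hq : q ≠ 0) (N : ℕ) : RA21 k 𝒜 q N * RAinv21 k 𝒜 q N = 1 :=
  calc RA21 k 𝒜 q N * RAinv21 k 𝒜 q N
      = (RA k 𝒜 q N * RAinv k 𝒜 q N).submatrix Prod.swap Prod.swap :=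
        submatrix_swap_mul_submatrix_swap _ _
    _ = 1 := by rw [RA_mul_RAinv hq]; exact submatrix_one_equiv (Equiv.prodComm _ _)

lemma RAinv21_mul_RA21 {q : k} (hq : q ≠ 0) (N : ℕ) : RAinv21 k 𝒜 q N * RA21 k 𝒜 q N = 1 :=
  calc RAinv21 k 𝒜 q N * RA21 k 𝒜 q N
      = (RAinv k 𝒜 q N * RA k 𝒜 q N).submatrix Prod.swap Prod.swap :=
        submatrix_swap_mul_submatrix_swap _ _
    _ = 1 := by rw [RAinv_mul_RA hq]; exact submatrix_one_equiv (Equiv.prodComm _ _)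

def unitRA {q : k} (hq : q ≠ 0) (N : ℕ) : (Matrix (Fin N × Fin N) (Fin N × Fin N) 𝒜)ˣ :=
  ⟨RA k 𝒜 q N, RAinv k 𝒜 q N, RA_mul_RAinv hq N, RAinv_mul_RA hq N⟩

def unitRA21 {q : k} (hq : q ≠ 0) (N : ℕ) : (Matrix (Fin N × Fin N) (Fin N × Fin N) 𝒜)ˣ :=
  ⟨RA21 k 𝒜 q N, RAinv21 k 𝒜 q N, RA21_mul_RAinv21 hq N, RAinv21_mul_RA21 hq N⟩

lemma RA21_eq_RAinv_add_smul_flipA (q : k) (N : ℕ) :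
    RA21 k 𝒜 q N = RAinv k 𝒜 q N + (q - q⁻¹) • flipA 𝒜 N N := by
  ext p r
  change algebraMap k 𝒜 (Rmat k q N p.swap r.swap) = _
  simp only [Rmat_swap_swap_eq_RmatInv_add, map_add, Matrix.add_apply, Matrix.smul_apply, RAinv,
    flipA, map_apply, of_apply, Prod.ext_iff, Prod.fst_swap, Prod.snd_swap]
  split_ifs <;> simp [Algebra.smul_def]

lemma RA_eq_RAinv21_add_smul_flipA (q : k) (N : ℕ) :
    RA k 𝒜 q N = RAinv21 k 𝒜 q N + (q - q⁻¹) • flipA 𝒜 N N := by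
  ext p r
  have h := congrFun (congrFun (RA21_eq_RAinv_add_smul_flipA (𝒜 := 𝒜) q N) p.swap) r.swap
  simpa [RA21, RAinv21, flipA, and_comm, Prod.swap] using h

lemma flipA_mul (N : ℕ) (X : Matrix (Fin N × Fin N) (Fin N × Fin N) 𝒜) :
    flipA 𝒜 N N * X = X.submatrix Prod.swap Prod.swap * flipA 𝒜 N N := by
  ext p r
  simp [Matrix.mul_apply, flipA, ite_and, Fintype.sum_prod_type, Prod.swap]

lemma flipA_mul_one_kronecker {N : ℕ} (X : Matrix (Fin N) (Fin N) 𝒜) :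
    flipA 𝒜 N N * (1 ⊗ₖ X) = (X ⊗ₖ 1) * flipA 𝒜 N N := by
  rw [flipA_mul, submatrix_swap_one_kronecker]

lemma flipA_mul_kronecker_one {N : ℕ} (X : Matrix (Fin N) (Fin N) 𝒜) :
    flipA 𝒜 N N * (X ⊗ₖ 1) = (1 ⊗ₖ X) * flipA 𝒜 N N := by
  rw [flipA_mul, submatrix_swap_kronecker_one]

lemma flipA_mul_RA21 (q : k) (N : ℕ) : flipA 𝒜 N N * RA21 k 𝒜 q N = RA k 𝒜 q N * flipA 𝒜 N N :=
  flipA_mul N _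

lemma semiconjBy_kronecker_one_flipA (q : k) {N : ℕ} (A : Matrix (Fin N) (Fin N) 𝒜) :
    SemiconjBy (A ⊗ₖ 1) (RA k 𝒜 q N * (1 ⊗ₖ A) * flipA 𝒜 N N)
      (flipA 𝒜 N N * (1 ⊗ₖ A) * RA21 k 𝒜 q N) :=
  calc (A ⊗ₖ 1) * (RA k 𝒜 q N * (1 ⊗ₖ A) * flipA 𝒜 N N)
      = (A ⊗ₖ 1) * RA k 𝒜 q N * ((1 ⊗ₖ A) * flipA 𝒜 N N) := by simp only [mul_assoc]
    _ = (A ⊗ₖ 1) * (RA k 𝒜 q N * flipA 𝒜 N N) * (A ⊗ₖ 1) := by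
        rw [← flipA_mul_kronecker_one]; simp only [mul_assoc]
    _ = (A ⊗ₖ 1) * flipA 𝒜 N N * RA21 k 𝒜 q N * (A ⊗ₖ 1) := by
        rw [← flipA_mul_RA21]; simp only [mul_assoc]
    _ = flipA 𝒜 N N * (1 ⊗ₖ A) * RA21 k 𝒜 q N * (A ⊗ₖ 1) := by rw [← flipA_mul_one_kronecker]

lemma commute_kronecker_one_of_semiconjBy (q : k) {N : ℕ} {A : Matrix (Fin N) (Fin N) 𝒜}
    (h : SemiconjBy (A ⊗ₖ 1) (RA k 𝒜 q N * (1 ⊗ₖ A) * RAinv k 𝒜 q N)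
      (RAinv21 k 𝒜 q N * (1 ⊗ₖ A) * RA21 k 𝒜 q N)) :
    Commute (A ⊗ₖ 1) (RA k 𝒜 q N * (1 ⊗ₖ A) * RA21 k 𝒜 q N) := by
  have hU : RA k 𝒜 q N * (1 ⊗ₖ A) * RA21 k 𝒜 q N = RA k 𝒜 q N * (1 ⊗ₖ A) * RAinv k 𝒜 q N
      + (q - q⁻¹) • (RA k 𝒜 q N * (1 ⊗ₖ A) * flipA 𝒜 N N) := by
    rw [RA21_eq_RAinv_add_smul_flipA, mul_add, Matrix.mul_smul]
  have hU' : RA k 𝒜 q N * (1 ⊗ₖ A) * RA21 k 𝒜 q N = RAinv21 k 𝒜 q N * (1 ⊗ₖ A) * RA21 k 𝒜 q N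
      + (q - q⁻¹) • (flipA 𝒜 N N * (1 ⊗ₖ A) * RA21 k 𝒜 q N) := by
    rw [RA_eq_RAinv21_add_smul_flipA, add_mul, add_mul, smul_mul_assoc, smul_mul_assoc]
  have hW := h.add_right ((semiconjBy_kronecker_one_flipA q A).smul_right (q - q⁻¹))
  rwa [← hU, ← hU'] at hW

/-- Let `A, D` be N × N matrices over `𝒜` satisfying the defining
relations of the quantized loop edge algebra `𝒟_q(e)`, with `A` and `D` invertible
(with two-sided inverses `Ai`, `Di`).  Then with `M := D A⁻¹ D⁻¹ A`, the quantum moment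
map identity holds on the coordinate generators: `R₂₁ M₁ R A₂ = A₂ R₂₁ M₁ R`.  (This is
the matrix identity establishing that the loop moment map `μ^e_v`, `l^i_j ↦ M^i_j`,
satisfies the quantum moment map condition on the generators `a^m_n`.) -/
theorem moment_map_identity_loop (q : k) (hq : q ≠ 0) {N : ℕ}
    (A D Ai Di : Matrix (Fin N) (Fin N) 𝒜)
    (hrel : LoopRel k 𝒜 q A D)
    (hA₁ : A * Ai = 1) (hA₂ : Ai * A = 1)
    (hD₁ : D * Di = 1) (hD₂ : Di * D = 1) :
    RA21 k 𝒜 q N * ((D * Ai * Di * A) ⊗ₖ (1 : Matrix (Fin N) (Fin N) 𝒜)) * RA k 𝒜 q N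
        * ((1 : Matrix (Fin N) (Fin N) 𝒜) ⊗ₖ A)
      = ((1 : Matrix (Fin N) (Fin N) 𝒜) ⊗ₖ A) * RA21 k 𝒜 q N
        * ((D * Ai * Di * A) ⊗ₖ (1 : Matrix (Fin N) (Fin N) 𝒜)) * RA k 𝒜 q N := by
  obtain ⟨hL1, -, hL3⟩ := hrel
  have hA := (reflection_eq_iff_semiconjBy (unitRA21 hq N) (unitRA hq N) _ _ _).1 hL1
  have hD := (reflection_eq_iff_semiconjBy (unitRA21 hq N) (unitRA21 hq N)⁻¹ _ _ _).1 hL3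
  have hW := commute_kronecker_one_of_semiconjBy q hA
  simp only [← kronecker_one_mul_kronecker_one]
  refine (reflection_eq_iff_semiconjBy (unitRA21 hq N) (unitRA hq N) _ _ _).2 ?_
  exact ((hD.mul_left (hW.semiconjBy.kronecker_one_inv_symm_left hA₁ hA₂)).mul_left
    (hD.kronecker_one_inv_symm_left hD₁ hD₂)).mul_left hA
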